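/- For an n×n complex matrix M, the coefficient of λ^{n-p} in the characteristic polynomial det(λI − M†M) equals (−1)^p times the sum over all p×p submatrices of M of the squared absolute values of their determinants. -/

import Mathlib

/-!
Expanding `det (λ - Mᴴ M)` by multilinearity shows that the coefficient of `λ^(n-p)` is
`(-1)^p` times the sum of the principal `p × p` minors of `Mᴴ M`. By Cauchy–Binet, the principal
minor on the rows and columns `c` is `∑ r, det (Mᴴ)_{c,r} det M_{r,c} = ∑ r, ‖det M_{r,c}‖²`.
-/

open Matrix

attribute [local instance] Classical.propDecidable

open Finset Function Equiv

section Combinatorics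

variable {ι : Type*} [LinearOrder ι] {p : ℕ}

def strictMonoProdPermEquivInjective :
    {f : Fin p → ι // StrictMono f} × Perm (Fin p) ≃ {g : Fin p → ι // Injective g} where
  toFun x := ⟨x.1.1 ∘ x.2, x.1.2.injective.comp x.2.injective⟩
  invFun g := (⟨g.1 ∘ Tuple.sort g.1,
      (Tuple.monotone_sort g.1).strictMono_of_injective (g.2.comp (Tuple.sort g.1).injective)⟩,
    (Tuple.sort g.1)⁻¹)
  left_inv := by
    rintro ⟨⟨f, hf⟩, σ⟩
    have hsorted : (f ∘ σ) ∘ Tuple.sort (f ∘ σ) = f := by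
      rw [Tuple.comp_perm_comp_sort_eq_comp_sort, Tuple.sort_eq_refl_iff_monotone.2 hf.monotone]
      rfl
    have hσ : σ * Tuple.sort (f ∘ σ) = 1 :=
      Perm.ext fun i => hf.injective (congrFun hsorted i)
    exact Prod.ext (Subtype.ext hsorted) (inv_eq_of_mul_eq_one_left hσ)
  right_inv g := by
    ext i
    simp

def strictMonoEquivPowersetCard : {f : Fin p → ι // StrictMono f} ≃ Set.powersetCard ι p where
  toFun f := Set.powersetCard.ofFinEmbEquiv (OrderEmbedding.ofStrictMono f.1 f.2)
  invFun s := ⟨Set.powersetCard.ofFinEmbEquiv.symm s,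
    (Set.powersetCard.ofFinEmbEquiv.symm s).strictMono⟩
  left_inv _ :=
    Subtype.ext (congrArg DFunLike.coe (Set.powersetCard.ofFinEmbEquiv.symm_apply_apply _))
  right_inv s := Set.powersetCard.ofFinEmbEquiv.apply_symm_apply s

end Combinatorics

section CauchyBinet

variable {R : Type*} [CommRing R] {ι m : Type*} [Fintype ι] [Fintype m] [DecidableEq m]

theorem det_mul_eq_sum_prod_mul_det_submatrix (A : Matrix m ι R) (B : Matrix ι m R) :
    det (A * B) = ∑ g : m → ι, (∏ i, B (g i) i) * det (A.submatrix id g) := by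
  simp only [det_apply', mul_apply, prod_univ_sum, Fintype.piFinset_univ, mul_sum,
    submatrix_apply, id_eq]
  rw [sum_comm]
  refine sum_congr rfl fun g _ => sum_congr rfl fun σ _ => ?_
  rw [prod_mul_distrib]
  ring

variable [LinearOrder ι] {p : ℕ}

theorem det_mul_eq_sum_det_submatrix_mul_det_submatrix
    (A : Matrix (Fin p) ι R) (B : Matrix ι (Fin p) R) :
    det (A * B) = ∑ f : {f : Fin p → ι // StrictMono f},
      det (A.submatrix id f.1) * det (B.submatrix f.1 id) := by
  calc det (A * B)
      = ∑ g ∈ univ.filter Injective, (∏ i, B (g i) i) * det (A.submatrix id g) := by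
        rw [det_mul_eq_sum_prod_mul_det_submatrix, sum_filter_of_ne]
        intro g _ hg
        by_contra hinj
        obtain ⟨i, j, hgij, hij⟩ := Function.not_injective_iff.1 hinj
        exact hg (by rw [det_zero_of_column_eq hij fun k => by simp [hgij], mul_zero])
    _ = ∑ g : {g : Fin p → ι // Injective g}, (∏ i, B (g.1 i) i) * det (A.submatrix id g.1) :=
        sum_subtype _ (by simp) _
    _ = ∑ x : {f : Fin p → ι // StrictMono f} × Perm (Fin p),
          (∏ i, B (x.1.1 (x.2 i)) i) * det (A.submatrix id (x.1.1 ∘ x.2)) :=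
        (Fintype.sum_equiv strictMonoProdPermEquivInjective _ _ fun _ => rfl).symm
    _ = ∑ f : {f : Fin p → ι // StrictMono f}, ∑ σ : Perm (Fin p),
          (∏ i, B (f.1 (σ i)) i) * (Perm.sign σ * det (A.submatrix id f.1)) := by
        rw [Fintype.sum_prod_type]
        refine sum_congr rfl fun f _ => sum_congr rfl fun σ _ => ?_
        rw [← det_permute']
        rfl
    _ = _ := by
        simp only [det_apply' (B.submatrix _ id), mul_sum, submatrix_apply, id_eq]
        exact sum_congr rfl fun f _ => sum_congr rfl fun σ _ => by ring

end CauchyBinet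

section PrincipalMinors

variable {R : Type*} [CommRing R] {ι : Type*} [Fintype ι] [LinearOrder ι] {p : ℕ}

theorem sum_powersetCard_det_submatrix_eq_sum_strictMono [DecidableEq ι] (A : Matrix ι ι R) :
    ∑ s ∈ univ.powersetCard p, (A.submatrix (Subtype.val : s → ι) Subtype.val).det =
      ∑ f : {f : Fin p → ι // StrictMono f}, (A.submatrix f.1 f.1).det := by
  rw [sum_subtype _ (p := (· ∈ Set.powersetCard ι p)) (by simp)]
  refine Fintype.sum_equiv strictMonoEquivPowersetCard.symm _ _ fun s => ?_
  rw [← det_submatrix_equiv_self (Set.powersetCard.orderIsoOfFin s).toEquiv, submatrix_submatrix]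
  rfl

theorem charpoly_coeff_card_sub_eq_sum_strictMono_minors [DecidableEq ι] (A : Matrix ι ι R)
    (hp : p ≤ Fintype.card ι) :
    A.charpoly.coeff (Fintype.card ι - p) =
      (-1) ^ p * ∑ f : {f : Fin p → ι // StrictMono f}, (A.submatrix f.1 f.1).det := by
  rw [charpoly_coeff_eq_sum_minors A p hp, sum_powersetCard_det_submatrix_eq_sum_strictMono]

theorem det_submatrix_conjTranspose_mul_self {𝕜 κ : Type*} [RCLike 𝕜] (M : Matrix ι κ 𝕜)
    (f : Fin p → κ) :
    det ((Mᴴ * M).submatrix f f) =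
      ∑ g : {g : Fin p → ι // StrictMono g}, (‖det (M.submatrix g.1 f)‖ ^ 2 : 𝕜) := by
  rw [submatrix_mul _ _ f id f bijective_id, det_mul_eq_sum_det_submatrix_mul_det_submatrix]
  refine sum_congr rfl fun g _ => ?_
  rw [submatrix_submatrix, submatrix_submatrix, comp_id, id_comp, ← conjTranspose_submatrix,
    det_conjTranspose, RCLike.star_def, RCLike.conj_mul]

end PrincipalMinors

/-- The coefficient of `λ^(n-p)` in the characteristic polynomial of `Mᴴ * M` equals
`(-1)^p` times the sum of the squared absolute values of the determinants of all
`p × p` submatrices of `M`. -/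
theorem charpoly_coeff_eq_sum_sq_subdets {n p : ℕ} (hpn : p ≤ n)
    (M : Matrix (Fin n) (Fin n) ℂ) :
    ((Mᴴ * M).charpoly).coeff (n - p) =
      (-1) ^ p * ((∑ r : {f : Fin p → Fin n // StrictMono f},
        ∑ c : {g : Fin p → Fin n // StrictMono g},
          ‖(M.submatrix r.1 c.1).det‖ ^ 2 : ℝ) : ℂ) := by
  rw [show n - p = Fintype.card (Fin n) - p by simp,
    charpoly_coeff_card_sub_eq_sum_strictMono_minors _ (by simpa using hpn), sum_comm]
  push_cast
  simp only [det_submatrix_conjTranspose_mul_self]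
  -- the two sides carry different, but equal, `Fintype` instances on the index subtype
  congr!
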